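/- arXiv:1903.09228 — 8 statements merged into one kernel-verified Lean document; each statement's English description precedes it below -/
import Mathlib

section
/- The function -1/(1 + e^z) has the power series expansion Σ_{k≥0} ((2^{k+1} - 1)/(k+1)) · B_{k+1} · z^k / k! valid for |z| < π, where B_k are the Bernoulli numbers with B_1 = -1/2. -/
/-!
Since `-1 / (1 + e^z) = 2 / (e^(2z) - 1) - 1 / (e^z - 1)`, multiplying by `z` gives `B(2z) - B(z)`,
where `B(z) = z / (e^z - 1)` is the Bernoulli generating function; as formal power series this says
`S * (1 + exp) = -1` for the claimed series `S`. The function is holomorphic on `|z| < π` (the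
zeros of `1 + e^z` are the odd multiples of `πi`), so its Taylor series at `0` converges there, and
by Leibniz's rule that Taylor series also satisfies `T * (1 + exp) = -1`; cancelling the unit
`1 + exp` gives `T = S`.
-/

open scoped Nat ContDiff Topology
open PowerSeries

section BernoulliSeries

variable (A : Type*) [CommRing A] [Algebra ℚ A]

noncomputable def negInvOneAddExpSeries : PowerSeries A :=
  mk fun k => algebraMap ℚ A ((2 ^ (k + 1) - 1) * bernoulli (k + 1) / (k + 1)!)

theorem X_mul_negInvOneAddExpSeries :
    X * negInvOneAddExpSeries A = rescale 2 (bernoulliPowerSeries A) - bernoulliPowerSeries A := by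
  ext (_ | k)
  · rw [coeff_zero_X_mul, map_sub, coeff_rescale]
    simp
  · simp only [coeff_succ_X_mul, negInvOneAddExpSeries, bernoulliPowerSeries, map_sub,
      coeff_rescale, coeff_mk]
    rw [mul_div_assoc, map_mul, map_sub, map_pow, map_ofNat, map_one, sub_one_mul]

theorem negInvOneAddExpSeries_mul_one_add_exp [IsDomain A] :
    negInvOneAddExpSeries A * (1 + exp A) = -1 := by
  set B := bernoulliPowerSeries A
  set E := exp A
  have hB : B * (E - 1) = X := bernoulliPowerSeries_mul_exp_sub_one A
  have hE2 : rescale 2 E = E * E := by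
    rw [← one_add_one_eq_two, ← exp_mul_exp_eq_exp_add, rescale_one]; rfl
  have hB2 : rescale 2 B * (E * E - 1) = 2 * X := by
    simpa [hE2, rescale_X, map_ofNat] using congrArg (rescale (2 : A)) hB
  have hE1 : E - 1 ≠ 0 := fun h => by simpa [E] using congrArg (coeff 1) h
  have key : X * (E - 1) * (negInvOneAddExpSeries A * (1 + E) + 1) = 0 := by
    linear_combination (1 + E) * (E - 1) * X_mul_negInvOneAddExpSeries A + hB2 - (1 + E) * hB
  exact eq_neg_of_add_eq_zero_left
    ((mul_eq_zero.mp key).resolve_left (mul_ne_zero X_ne_zero hE1))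

end BernoulliSeries

section Taylor

variable {𝕜 : Type*} [NontriviallyNormedField 𝕜]

noncomputable def taylorPowerSeries (f : 𝕜 → 𝕜) (x : 𝕜) : PowerSeries 𝕜 :=
  mk fun n => iteratedDeriv n f x / n !

theorem taylorPowerSeries_congr {f g : 𝕜 → 𝕜} {x : 𝕜} (h : f =ᶠ[𝓝 x] g) :
    taylorPowerSeries f x = taylorPowerSeries g x := by
  ext n
  simp only [taylorPowerSeries, coeff_mk, (h.iteratedDeriv n).eq_of_nhds]

theorem taylorPowerSeries_const (c x : 𝕜) : taylorPowerSeries (fun _ => c) x = C c := by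
  ext n
  simp only [taylorPowerSeries, coeff_mk, iteratedDeriv_const, coeff_C]
  split_ifs <;> simp_all

theorem taylorPowerSeries_mul [CharZero 𝕜] {f g : 𝕜 → 𝕜} {x : 𝕜} (hf : ContDiffAt 𝕜 ∞ f x)
    (hg : ContDiffAt 𝕜 ∞ g x) :
    taylorPowerSeries (f * g) x = taylorPowerSeries f x * taylorPowerSeries g x := by
  ext n
  rw [coeff_mul, Finset.Nat.sum_antidiagonal_eq_sum_range_succ fun i j =>
    coeff i (taylorPowerSeries f x) * coeff j (taylorPowerSeries g x)]
  simp only [taylorPowerSeries, coeff_mk, Finset.sum_div,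
    iteratedDeriv_mul (hf.of_le (mod_cast le_top)) (hg.of_le (mod_cast le_top))]
  refine Finset.sum_congr rfl fun i hi => ?_
  have hn : (n ! : 𝕜) ≠ 0 := Nat.cast_ne_zero.mpr n.factorial_ne_zero
  rw [Nat.cast_choose 𝕜 (Nat.lt_succ_iff.mp (Finset.mem_range.mp hi))]
  field_simp

end Taylor

theorem Complex.hasSum_taylorPowerSeries {f : ℂ → ℂ} {c : ℂ} {r : ℝ}
    (hf : DifferentiableOn ℂ f (Metric.ball c r)) {z : ℂ} (hz : z ∈ Metric.ball c r) :
    HasSum (fun n => coeff n (taylorPowerSeries f c) * (z - c) ^ n) (f z) := by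
  refine (hasSum_taylorSeries_on_ball hf hz).congr_fun fun n => ?_
  simp only [taylorPowerSeries, coeff_mk, smul_eq_mul]
  ring

theorem taylorPowerSeries_one_add_cexp :
    taylorPowerSeries (fun w => 1 + Complex.exp w) 0 = 1 + exp ℂ := by
  ext (_ | n)
  · simp [taylorPowerSeries]
  · simp [taylorPowerSeries, iteratedDeriv_eq_iterate, Complex.iter_deriv_exp, coeff_exp]

theorem Complex.one_add_exp_ne_zero {z : ℂ} (hz : ‖z‖ < Real.pi) : 1 + exp z ≠ 0 := by
  intro h
  obtain ⟨n, hn⟩ := exp_eq_exp_iff_exists_int.mp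
    ((eq_neg_of_add_eq_zero_right h).trans exp_pi_mul_I.symm)
  have hz' : z = ((2 * n + 1) * Real.pi : ℝ) * I := by rw [hn]; push_cast; ring
  have h1 : (1 : ℝ) ≤ |2 * (n : ℝ) + 1| := by
    exact_mod_cast Int.one_le_abs (show 2 * n + 1 ≠ 0 by omega)
  rw [hz', norm_mul, norm_I, mul_one, norm_real, Real.norm_eq_abs, abs_mul,
    abs_of_pos Real.pi_pos] at hz
  nlinarith [Real.pi_pos]

theorem neg_inv_one_add_exp_series (z : ℂ) (hz : ‖z‖ < Real.pi) :
    HasSum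
      (fun k : ℕ => ((2 ^ (k + 1) - 1 : ℂ) / (k + 1)) * (bernoulli (k + 1) : ℂ)
        * z ^ k / (Nat.factorial k : ℂ))
      (-1 / (1 + Complex.exp z)) := by
  set f : ℂ → ℂ := fun w => -1 / (1 + Complex.exp w)
  have hne : ∀ w ∈ Metric.ball (0 : ℂ) Real.pi, 1 + Complex.exp w ≠ 0 :=
    fun w hw => Complex.one_add_exp_ne_zero (mem_ball_zero_iff.mp hw)
  have hball : Metric.ball (0 : ℂ) Real.pi ∈ 𝓝 0 := Metric.ball_mem_nhds 0 Real.pi_pos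
  have hdiff : DifferentiableOn ℂ f (Metric.ball 0 Real.pi) :=
    (differentiableOn_const _).div (by fun_prop) hne
  have hprod : taylorPowerSeries f 0 * (1 + exp ℂ) = -1 := by
    rw [← taylorPowerSeries_one_add_cexp, ← taylorPowerSeries_mul
      ((hdiff.contDiffOn Metric.isOpen_ball).contDiffAt hball) (by fun_prop),
      taylorPowerSeries_congr (g := fun _ => -1), taylorPowerSeries_const, map_neg, map_one]
    filter_upwards [hball] with w hw
    exact div_mul_cancel₀ _ (hne w hw)
  have hcoeff : taylorPowerSeries f 0 = negInvOneAddExpSeries ℂ := by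
    refine mul_right_cancel₀ (b := 1 + exp ℂ) (fun h => ?_)
      (hprod.trans (negInvOneAddExpSeries_mul_one_add_exp ℂ).symm)
    simpa using congrArg constantCoeff h
  have hsum := Complex.hasSum_taylorPowerSeries hdiff (mem_ball_zero_iff.mpr hz)
  rw [hcoeff] at hsum
  refine hsum.congr_fun fun k => ?_
  simp only [negInvOneAddExpSeries, coeff_mk, sub_zero, eq_ratCast]
  push_cast [Nat.factorial_succ]
  field_simp
end

section
/- For every integer k ≥ 1, the Bernoulli numbers satisfy ((2^{k+1} - 1)/(k+1)) · B_{k+1} = 1/2 - Σ_{l=1}^{k} (k choose l) · ((2^{l+1} - 1)/(l+1)) · B_{l+1}. -/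
/-!
With `a n = (2 ^ n - 1) * B n`, the exponential generating function of `a` is
`B(2z) - B(z) = 2z / (e^{2z} - 1) - z / (e^z - 1) = -z / (e^z + 1)`. Comparing coefficients of `z^n`
in `(e^z + 1) · Σ a n z^n / n! = -z` gives `Σ_{i ≤ n} (n choose i) a i = -a n` for `n ≠ 1`.
For `n = k + 1` the terms `a 0 = 0` and `a 1 = -1/2` split off, and
`(k + 1 choose l + 1) / (k + 1) = (k choose l) / (l + 1)` turns what remains into the recursion.
-/

open PowerSeries Finset Nat

lemma exp_sub_one_ne_zero (A : Type*) [CommRing A] [Algebra ℚ A] [Nontrivial A] :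
    exp A - 1 ≠ 0 := fun h ↦ by
  simpa [coeff_exp] using congrArg (coeff 1) h

lemma rescale_two_bernoulliPowerSeries_mul_exp_sq_sub_one (A : Type*) [CommRing A] [Algebra ℚ A] :
    rescale 2 (bernoulliPowerSeries A) * (exp A ^ 2 - 1) = 2 * X := by
  have h := congrArg (rescale (2 : A)) (bernoulliPowerSeries_mul_exp_sub_one A)
  rwa [map_mul, map_sub, map_one, rescale_X, map_ofNat, ← Nat.cast_ofNat,
    ← exp_pow_eq_rescale_exp] at h

lemma rescale_two_sub_bernoulliPowerSeries_mul_exp_add_one :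
    (rescale 2 (bernoulliPowerSeries ℚ) - bernoulliPowerSeries ℚ) * (exp ℚ + 1) = -X := by
  refine mul_right_cancel₀ (exp_sub_one_ne_zero ℚ) ?_
  linear_combination rescale_two_bernoulliPowerSeries_mul_exp_sq_sub_one ℚ
    - (exp ℚ + 1) * bernoulliPowerSeries_mul_exp_sub_one ℚ

lemma rescale_two_sub_bernoulliPowerSeries :
    rescale 2 (bernoulliPowerSeries ℚ) - bernoulliPowerSeries ℚ =
      mk fun n ↦ (2 ^ n - 1) * bernoulli n / n ! := by
  ext n
  simp only [map_sub, coeff_rescale, bernoulliPowerSeries, coeff_mk, Algebra.algebraMap_self,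
    RingHom.id_apply]
  ring

lemma coeff_mk_div_factorial_mul_exp (a : ℕ → ℚ) (n : ℕ) :
    coeff n (mk (fun i ↦ a i / i !) * exp ℚ) =
      (∑ i ∈ range (n + 1), n.choose i * a i) / n ! := by
  rw [coeff_mul, sum_antidiagonal_eq_sum_range_succ_mk, sum_div]
  refine sum_congr rfl fun i hi ↦ ?_
  have hin : i ≤ n := Nat.lt_succ_iff.mp (mem_range.mp hi)
  simp only [coeff_mk, coeff_exp, Algebra.algebraMap_self, RingHom.id_apply,
    Nat.cast_choose ℚ hin]
  field_simp

lemma sum_range_choose_mul_two_pow_sub_one_mul_bernoulli {n : ℕ} (hn : n ≠ 1) :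
    ∑ i ∈ range (n + 1), n.choose i * ((2 ^ i - 1) * bernoulli i) =
      -((2 ^ n - 1) * bernoulli n) := by
  have h := congrArg (coeff n) rescale_two_sub_bernoulliPowerSeries_mul_exp_add_one
  rw [rescale_two_sub_bernoulliPowerSeries, mul_add, mul_one, map_add,
    coeff_mk_div_factorial_mul_exp, coeff_mk, map_neg, coeff_X, if_neg hn, neg_zero, ← add_div,
    div_eq_zero_iff] at h
  exact eq_neg_of_add_eq_zero_left (h.resolve_right (by positivity))

lemma cast_choose_add_one_div {K : Type*} [Field K] [CharZero K] (k l : ℕ) :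
    ((k + 1).choose (l + 1) : K) / (k + 1) = k.choose l / (l + 1) := by
  rw [div_eq_div_iff (Nat.cast_add_one_ne_zero k) (Nat.cast_add_one_ne_zero l)]
  exact_mod_cast (add_one_mul_choose_eq k l).symm.trans (Nat.mul_comm _ _)

theorem bernoulli_recursion (k : ℕ) (hk : 1 ≤ k) :
    ((2 ^ (k + 1) - 1 : ℚ) / (k + 1)) * bernoulli (k + 1) =
      1 / 2 - ∑ l ∈ Finset.Icc 1 k,
        (k.choose l : ℚ) * ((2 ^ (l + 1) - 1) / (l + 1)) * bernoulli (l + 1) := by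
  have key := sum_range_choose_mul_two_pow_sub_one_mul_bernoulli (n := k + 1) (by omega)
  simp only [sum_range_succ' _ (k + 1), sum_range_succ' _ k, zero_add, choose_one_right,
    choose_zero_right, bernoulli_one, bernoulli_zero] at key
  have hreindex :
      ∑ l ∈ Icc 1 k, (k.choose l : ℚ) * ((2 ^ (l + 1) - 1) / (l + 1)) * bernoulli (l + 1) =
        ∑ i ∈ range k, ((k + 1).choose (i + 1 + 1) : ℚ) *
          ((2 ^ (i + 1 + 1) - 1) * bernoulli (i + 1 + 1)) / (k + 1) := by
    rw [← Ico_add_one_right_eq_Icc, sum_Ico_eq_sum_range, add_tsub_cancel_right]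
    refine sum_congr rfl fun i _ ↦ ?_
    rw [add_comm 1 i, mul_div_right_comm ((k + 1).choose (i + 1 + 1) : ℚ),
      cast_choose_add_one_div]
    push_cast
    ring
  rw [hreindex, ← sum_div, eq_sub_iff_add_eq, div_mul_eq_mul_div, ← add_div,
    div_eq_iff (by positivity)]
  push_cast at key
  linear_combination key
end

section
/- For every integer k ≥ 0, the series 1^k - 3^k + 5^k - 7^k + ⋯ is Abel summable with Abel sum (-1)^{⌊k/2⌋} · E_k / 2; that is, for 0 ≤ x < 1 the series Σ_{n≥0} (-1)^n (2n+1)^k x^n converges, and its limit as x → 1⁻ equals (-1)^{⌊k/2⌋} E_k / 2. -/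
/-!
Put `x = e^{-2s}` with `s > 0`. The geometric series gives
`∑ (-1)^n e^{-(2n+1)s} = sech s / 2`, and differentiating `k` times termwise gives
`∑ (-1)^n (2n+1)^k x^n = e^s (-1)^k sech⁽ᵏ⁾(s) / 2`.
The right side is continuous at `s = 0`, so the Abel sum is `(-1)^k sech⁽ᵏ⁾(0) / 2`.
Since `sech t = sec (i t)`, `sech⁽ᵏ⁾(0) = i^k E_k`, and `(-1)^k i^k = (-1)^{k/2}` for even `k`;
for odd `k` both sides vanish because `sech` and `sec` are even.
-/

open Filter Topology

/-- Euler numbers: `E n` is the `n`-th Taylor coefficient (times `n!`) of `1/cos` at `0`. -/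
noncomputable def eulerNumber (n : ℕ) : ℝ :=
  iteratedDeriv n (fun x : ℝ => (Real.cos x)⁻¹) 0

open Real

theorem summable_odd_pow_mul_geometric {R : Type*} [NormedCommRing R] [CompleteSpace R]
    (k : ℕ) {r : R} (hr : ‖r‖ < 1) :
    Summable fun n : ℕ => (2 * (n : R) + 1) ^ k * r ^ n := by
  have hexpand (n : ℕ) : (2 * (n : R) + 1) ^ k * r ^ n =
      ∑ j ∈ Finset.range (k + 1), (2 ^ j * k.choose j) * ((n : R) ^ j * r ^ n) := by
    rw [add_pow, Finset.sum_mul]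
    exact Finset.sum_congr rfl fun j _ => by ring
  simp_rw [hexpand]
  exact summable_sum fun j _ => (summable_pow_mul_geometric_of_norm_lt_one j hr).mul_left _

theorem Function.Even.iteratedDeriv_odd_eq_zero {𝕜 F : Type*} [NontriviallyNormedField 𝕜]
    [NormedAddCommGroup F] [NormedSpace 𝕜 F] [IsAddTorsionFree F] {f : 𝕜 → F}
    (hf : f.Even) {k : ℕ} (hk : Odd k) : iteratedDeriv k f 0 = 0 := by
  have h := iteratedDeriv_comp_neg k f 0
  rw [funext hf, neg_zero, hk.neg_one_pow, neg_one_smul] at h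
  exact self_eq_neg.mp h

theorem iteratedDeriv_re_comp_mul_ofReal {f : ℂ → ℂ} {U : Set ℂ} (hU : IsOpen U)
    (hf : DifferentiableOn ℂ f U) (c : ℂ) (k : ℕ) {x : ℝ} (hx : c * x ∈ U) :
    iteratedDeriv k (fun t : ℝ => (f (c * t)).re) x = (c ^ k * iteratedDeriv k f (c * x)).re := by
  induction k generalizing x with
  | zero => simp
  | succ k ih =>
    have hV : IsOpen {t : ℝ | c * t ∈ U} :=
      hU.preimage (continuous_const.mul Complex.continuous_ofReal)
    have hev : iteratedDeriv k (fun t : ℝ => (f (c * t)).re)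
        =ᶠ[𝓝 x] fun t : ℝ => (c ^ k * iteratedDeriv k f (c * t)).re :=
      eventually_of_mem (hV.mem_nhds hx) fun t ht => ih ht
    have hfk : HasDerivAt (iteratedDeriv k f) (iteratedDeriv (k + 1) f (c * x)) (c * x) := by
      rw [iteratedDeriv_succ, iteratedDeriv_eq_iterate]
      exact ((hf.analyticOnNhd hU).iterated_deriv k _ hx).differentiableAt.hasDerivAt
    have hcomp : HasDerivAt (fun z : ℂ => c ^ k * iteratedDeriv k f (c * z))
        (c ^ (k + 1) * iteratedDeriv (k + 1) f (c * x)) x := by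
      have hlin : HasDerivAt (fun z : ℂ => c * z) c x := by
        simpa using (hasDerivAt_id (x : ℂ)).const_mul c
      exact ((hfk.comp (x : ℂ) hlin).const_mul (c ^ k)).congr_deriv (by ring)
    rw [iteratedDeriv_succ, hev.deriv_eq, hcomp.real_of_complex.deriv]

noncomputable def sech (s : ℝ) : ℝ := (cosh s)⁻¹

theorem contDiff_sech {n : WithTop ℕ∞} : ContDiff ℝ n sech :=
  contDiff_cosh.inv fun s => (cosh_pos s).ne'

theorem sech_even : sech.Even := fun s => by simp [sech]

theorem iteratedDeriv_re_inv_cos_comp_mul_ofReal_zero (c : ℂ) (k : ℕ) :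
    iteratedDeriv k (fun t : ℝ => ((Complex.cos (c * t))⁻¹).re) 0 =
      (c ^ k * iteratedDeriv k (fun z : ℂ => (Complex.cos z)⁻¹) 0).re := by
  have h := iteratedDeriv_re_comp_mul_ofReal (f := fun z => (Complex.cos z)⁻¹)
    (isOpen_ne_fun Complex.continuous_cos continuous_const)
    (Complex.differentiable_cos.differentiableOn.inv fun _ hz => hz) c k (x := 0) (by simp)
  rwa [Complex.ofReal_zero, mul_zero] at h

theorem iteratedDeriv_sech_zero_eq_re (k : ℕ) :
    iteratedDeriv k sech 0 =
      (Complex.I ^ k * iteratedDeriv k (fun z : ℂ => (Complex.cos z)⁻¹) 0).re := by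
  have hsech : sech = fun t : ℝ => ((Complex.cos (Complex.I * t))⁻¹).re := by
    ext t
    rw [mul_comm, Complex.cos_mul_I, ← Complex.ofReal_cosh, ← Complex.ofReal_inv,
      Complex.ofReal_re, sech]
  rw [hsech, iteratedDeriv_re_inv_cos_comp_mul_ofReal_zero]

theorem eulerNumber_eq_re (k : ℕ) :
    eulerNumber k = (iteratedDeriv k (fun z : ℂ => (Complex.cos z)⁻¹) 0).re := by
  have hsec : (fun t : ℝ => (cos t)⁻¹) = fun t : ℝ => ((Complex.cos (1 * t))⁻¹).re := by
    ext t
    rw [one_mul, ← Complex.ofReal_cos, ← Complex.ofReal_inv, Complex.ofReal_re]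
  rw [eulerNumber, hsec, iteratedDeriv_re_inv_cos_comp_mul_ofReal_zero, one_pow, one_mul]

theorem neg_one_pow_mul_iteratedDeriv_sech_zero (k : ℕ) :
    (-1) ^ k * iteratedDeriv k sech 0 = (-1) ^ (k / 2) * eulerNumber k := by
  rcases Nat.even_or_odd' k with ⟨m, rfl | rfl⟩
  · have hI : Complex.I ^ (2 * m) = ((-1 : ℝ) ^ m : ℝ) := by
      rw [pow_mul, Complex.I_sq]; push_cast; rfl
    rw [iteratedDeriv_sech_zero_eq_re, hI, Complex.re_ofReal_mul, ← eulerNumber_eq_re,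
      pow_mul, neg_one_sq, one_pow, one_mul, Nat.mul_div_cancel_left m two_pos]
  · have hodd : Odd (2 * m + 1) := odd_two_mul_add_one m
    have hsec : (fun t : ℝ => (cos t)⁻¹).Even := fun t => by simp
    rw [sech_even.iteratedDeriv_odd_eq_zero hodd, eulerNumber,
      hsec.iteratedDeriv_odd_eq_zero hodd, mul_zero, mul_zero]

noncomputable def oddExpTerm (k : ℕ) (s : ℝ) (n : ℕ) : ℝ :=
  (-1) ^ n * (2 * (n : ℝ) + 1) ^ k * exp (-(2 * n + 1) * s)

theorem oddExpTerm_eq (k : ℕ) (s : ℝ) (n : ℕ) :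
    oddExpTerm k s n = exp (-s) * ((2 * (n : ℝ) + 1) ^ k * (-exp (-(2 * s))) ^ n) := by
  rw [oddExpTerm, neg_pow (exp _), ← exp_nat_mul,
    show -(2 * (n : ℝ) + 1) * s = -s + n * -(2 * s) by ring, exp_add]
  ring

theorem norm_neg_exp_neg_two_mul_lt_one {s : ℝ} (hs : 0 < s) : ‖-exp (-(2 * s))‖ < 1 := by
  rw [norm_neg, norm_of_nonneg (exp_pos _).le, exp_lt_one_iff]
  linarith

theorem summable_oddExpTerm (k : ℕ) {s : ℝ} (hs : 0 < s) : Summable (oddExpTerm k s) :=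
  ((summable_odd_pow_mul_geometric k (norm_neg_exp_neg_two_mul_lt_one hs)).mul_left
    (exp (-s))).congr fun n => (oddExpTerm_eq k s n).symm

theorem hasSum_oddExpTerm_zero {s : ℝ} (hs : 0 < s) : HasSum (oddExpTerm 0 s) (sech s / 2) := by
  have h := (hasSum_geometric_of_norm_lt_one (norm_neg_exp_neg_two_mul_lt_one hs)).mul_left
    (exp (-s))
  have hsum : exp (-s) * (1 - -exp (-(2 * s)))⁻¹ = sech s / 2 := by
    have hexp : exp (-(2 * s)) = exp (-s) * exp (-s) := by rw [← exp_add]; ring_nf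
    have hinv : exp s * exp (-s) = 1 := by rw [← exp_add, add_neg_cancel, exp_zero]
    rw [sech, cosh_eq, hexp, sub_neg_eq_add]
    field_simp
    linear_combination hinv
  rw [hsum] at h
  exact h.congr_fun fun n => by rw [oddExpTerm_eq, pow_zero, one_mul]

theorem hasDerivAt_oddExpTerm (k n : ℕ) (t : ℝ) :
    HasDerivAt (fun t => oddExpTerm k t n) (-oddExpTerm (k + 1) t n) t := by
  have h := ((hasDerivAt_id t).const_mul (-(2 * (n : ℝ) + 1))).exp.const_mul
    ((-1) ^ n * (2 * (n : ℝ) + 1) ^ k)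
  exact h.congr_deriv (by simp only [oddExpTerm, id]; ring)

theorem antitone_norm_oddExpTerm (k n : ℕ) : Antitone fun s => ‖oddExpTerm k s n‖ := by
  intro s t hst
  simp only [oddExpTerm, norm_mul, norm_pow, norm_neg, norm_one, one_pow, one_mul,
    Real.norm_eq_abs, abs_exp, neg_mul]
  gcongr

theorem hasDerivAt_tsum_oddExpTerm (k : ℕ) {s : ℝ} (hs : 0 < s) :
    HasDerivAt (fun t => ∑' n, oddExpTerm k t n) (-∑' n, oddExpTerm (k + 1) s n) s := by
  have hs2 : 0 < s / 2 := half_pos hs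
  have hmem : s ∈ Set.Ioi (s / 2) := half_lt_self hs
  rw [← tsum_neg]
  exact hasDerivAt_tsum_of_isPreconnected (summable_oddExpTerm (k + 1) hs2).norm isOpen_Ioi
    isPreconnected_Ioi (fun n t _ => hasDerivAt_oddExpTerm k n t)
    (fun n t ht => (norm_neg _).trans_le (antitone_norm_oddExpTerm (k + 1) n (le_of_lt ht)))
    hmem (summable_oddExpTerm k hs) hmem

theorem hasSum_oddExpTerm (k : ℕ) {s : ℝ} (hs : 0 < s) :
    HasSum (oddExpTerm k s) ((-1) ^ k * iteratedDeriv k sech s / 2) := by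
  induction k generalizing s with
  | zero => simpa using hasSum_oddExpTerm_zero hs
  | succ k ih =>
    have hseries : (fun t => (-1) ^ k * iteratedDeriv k sech t / 2) =ᶠ[𝓝 s]
        fun t => ∑' n, oddExpTerm k t n :=
      eventually_of_mem (Ioi_mem_nhds hs) fun t ht => (ih ht).tsum_eq.symm
    have hderiv : HasDerivAt (fun t => (-1) ^ k * iteratedDeriv k sech t / 2)
        ((-1) ^ k * iteratedDeriv (k + 1) sech s / 2) s := by
      rw [iteratedDeriv_succ]
      have hdiff := contDiff_sech.differentiable_iteratedDeriv k (WithTop.coe_lt_top _)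
      exact ((hdiff s).hasDerivAt.const_mul _).div_const 2
    have htsum := (hasDerivAt_tsum_oddExpTerm k hs).unique
      (hderiv.congr_of_eventuallyEq hseries.symm)
    convert (summable_oddExpTerm (k + 1) hs).hasSum using 1
    rw [pow_succ]
    linarith

theorem hasSum_alternating_odd_pow_mul_exp_pow (k : ℕ) {s : ℝ} (hs : 0 < s) :
    HasSum (fun n : ℕ => (-1) ^ n * (2 * (n : ℝ) + 1) ^ k * exp (-(2 * s)) ^ n)
      (exp s * ((-1) ^ k * iteratedDeriv k sech s / 2)) := by
  refine ((hasSum_oddExpTerm k hs).mul_left (exp s)).congr_fun fun n => ?_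
  rw [oddExpTerm_eq, ← mul_assoc, ← exp_add, add_neg_cancel, exp_zero, one_mul, neg_pow]
  ring

theorem abel_sum_alternating_odd_powers (k : ℕ) :
    (∀ x : ℝ, 0 ≤ x → x < 1 →
      Summable (fun n : ℕ => (-1 : ℝ) ^ n * (2 * (n : ℝ) + 1) ^ k * x ^ n)) ∧
    Tendsto (fun x : ℝ => ∑' n : ℕ, (-1 : ℝ) ^ n * (2 * (n : ℝ) + 1) ^ k * x ^ n)
      (𝓝[Set.Ico (0 : ℝ) 1] 1)
      (𝓝 ((-1 : ℝ) ^ (k / 2) * eulerNumber k / 2)) := by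
  refine ⟨fun x hx0 hx1 => ?_, ?_⟩
  · have hr : ‖-x‖ < 1 := by rwa [norm_neg, norm_of_nonneg hx0]
    exact (summable_odd_pow_mul_geometric k hr).congr fun n => by rw [neg_pow]; ring
  set Φ : ℝ → ℝ := fun s => exp s * ((-1) ^ k * iteratedDeriv k sech s / 2)
  have hΦ : Continuous Φ := by
    have := contDiff_sech.continuous_iteratedDeriv k (n := ⊤) le_top
    fun_prop
  have hΦ0 : Φ 0 = (-1) ^ (k / 2) * eulerNumber k / 2 := by
    simp only [Φ, exp_zero, one_mul, mul_div_assoc', neg_one_pow_mul_iteratedDeriv_sech_zero]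
  have hlog : Tendsto (fun x : ℝ => -log x / 2) (𝓝[Set.Ico (0 : ℝ) 1] 1) (𝓝 0) := by
    simpa using (((continuousAt_log one_ne_zero).tendsto.neg).div_const 2).mono_left
      nhdsWithin_le_nhds
  rw [← hΦ0]
  refine (hΦ.continuousAt.tendsto.comp hlog).congr' ?_
  filter_upwards [self_mem_nhdsWithin, nhdsWithin_le_nhds (Ioi_mem_nhds one_pos)]
    with x hx (hxpos : 0 < x)
  have hs : 0 < -log x / 2 := by linarith [log_neg hxpos hx.2]
  have hx : exp (-(2 * (-log x / 2))) = x := by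
    rw [mul_div_cancel₀ _ two_ne_zero, neg_neg, exp_log hxpos]
  have hsum := (hasSum_alternating_odd_pow_mul_exp_pow k hs).tsum_eq
  rw [hx] at hsum
  exact hsum.symm
end

section
/- Let S* be a ℂ-linear summability method satisfying the translation rule that sums the alternating power series σ_k = Σ_{n≥0} (-1)^n (n+1)^k for every integer k ≥ 0. Then S*(σ_0) = 1/2 and S*(σ_k) = ((2^{k+1} - 1)/(k+1)) · B_{k+1} for all k ≥ 1. -/
open PowerSeries Finset Nat Finset.Nat in
lemma Vmul : (PowerSeries.mk fun m => ((2 ^ m - 1 : ℚ) * bernoulli m) / m !) * (PowerSeries.exp ℚ + 1) = -X := by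
  have hB := bernoulliPowerSeries_mul_exp_sub_one ℚ
  set B := bernoulliPowerSeries ℚ with hBdef
  have hV : (PowerSeries.mk fun m => ((2 ^ m - 1 : ℚ) * bernoulli m) / m !) = rescale 2 B - B := by
    ext n
    simp [coeff_rescale, hBdef, bernoulliPowerSeries, coeff_mk]
    ring
  have hexp2 : PowerSeries.exp ℚ * PowerSeries.exp ℚ = rescale 2 (PowerSeries.exp ℚ) := by
    have h := exp_pow_eq_rescale_exp (A := ℚ) 2
    rw [pow_two] at h
    simpa using h
  have hne : PowerSeries.exp ℚ - 1 ≠ 0 := by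
    intro h
    have := congrArg (coeff 1) h
    simp [coeff_exp] at this
  apply mul_right_cancel₀ hne
  rw [hV]
  have h1 : (rescale 2 B - B) * (PowerSeries.exp ℚ + 1) * (PowerSeries.exp ℚ - 1)
      = rescale 2 B * rescale 2 (PowerSeries.exp ℚ - 1) - B * (PowerSeries.exp ℚ - 1) * (PowerSeries.exp ℚ + 1) := by
    rw [map_sub, map_one, ← hexp2]; ring
  rw [h1, ← map_mul, hB, rescale_X]
  have : (C 2 : ℚ⟦X⟧) * X = 2 * X := by
    rw [map_ofNat]
  rw [this]
  ring

open PowerSeries Finset Nat Finset.Nat in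
lemma sumv (N : ℕ) (hN : N ≠ 1) :
    (∑ m ∈ range (N + 1), (N.choose m : ℚ) * ((2 ^ m - 1) * bernoulli m))
      + (2 ^ N - 1) * bernoulli N = 0 := by
  have h := congrArg (coeff N) Vmul
  rw [coeff_mul] at h
  rw [sum_antidiagonal_eq_sum_range_succ_mk] at h
  simp only [coeff_mk, map_add, coeff_exp, coeff_one, map_neg, coeff_X, hN, if_false,
    Algebra.algebraMap_self, RingHom.id_apply, neg_zero, mul_add] at h
  rw [sum_add_distrib] at h
  have h2 : ∑ x ∈ Finset.range N.succ,
      ((2 ^ x - 1 : ℚ) * bernoulli x / ↑x ! * if N - x = 0 then 1 else 0)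
      = (2 ^ N - 1 : ℚ) * bernoulli N / ↑N ! := by
    rw [Finset.sum_range_succ]
    rw [Finset.sum_eq_zero, Nat.sub_self]
    · simp
    · intro x hx
      rw [if_neg, mul_zero]
      have := Finset.mem_range.mp hx
      omega
  rw [h2] at h
  have h3 := congrArg (fun q : ℚ => (N ! : ℚ) * q) h
  simp only [mul_zero, mul_add, Finset.mul_sum] at h3
  rw [← h3]
  congr 1
  · apply Finset.sum_congr rfl
    intro m hm
    rw [Nat.cast_choose ℚ (Nat.le_of_lt_succ (Finset.mem_range.mp hm))]
    have hm1 : (m ! : ℚ) ≠ 0 := by exact_mod_cast Nat.factorial_ne_zero m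
    have hm2 : ((N - m)! : ℚ) ≠ 0 := by exact_mod_cast Nat.factorial_ne_zero (N - m)
    field_simp
  · have hN1 : (N ! : ℚ) ≠ 0 := by exact_mod_cast Nat.factorial_ne_zero N
    field_simp

open Finset Nat in
lemma sumvC (N : ℕ) (hN : N ≠ 1) :
    (∑ m ∈ range (N + 1), (N.choose m : ℂ) * ((2 ^ m - 1) * (bernoulli m : ℂ)))
      + (2 ^ N - 1) * (bernoulli N : ℂ) = 0 := by
  have h := congrArg (fun q : ℚ => (q : ℂ)) (sumv N hN)
  push_cast at h
  convert h using 2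


open Finset Nat in
lemma keyC (k : ℕ) (hk : 1 ≤ k) :
    (∑ j ∈ range (k + 1), (k.choose j : ℂ) *
      (if j = 0 then 1/2 else (2 ^ (j + 1) - 1 : ℂ) / ((j : ℂ) + 1) * (bernoulli (j + 1) : ℂ)))
      + (2 ^ (k + 1) - 1 : ℂ) / ((k : ℂ) + 1) * (bernoulli (k + 1) : ℂ) = 1 := by
  have hk1 : ((k : ℂ) + 1) ≠ 0 := by
    intro h
    have : ((k : ℂ) + 1) = ((k + 1 : ℕ) : ℂ) := by push_cast; ring
    rw [this] at h
    exact_mod_cast h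
  have hstep : ∀ j : ℕ, (if j = 0 then (1 : ℂ)/2 else (2 ^ (j + 1) - 1 : ℂ) / ((j : ℂ) + 1) * (bernoulli (j + 1) : ℂ))
      = (2 ^ (j + 1) - 1 : ℂ) / ((j : ℂ) + 1) * (bernoulli (j + 1) : ℂ) + (if j = 0 then 1 else 0) := by
    intro j
    split
    · subst ‹j = 0›
      rw [bernoulli_one]
      push_cast
      norm_num
    · rw [add_zero]
  simp_rw [hstep, mul_add, Finset.sum_add_distrib]
  have hsec : ∑ j ∈ range (k + 1), (k.choose j : ℂ) * (if j = 0 then 1 else 0) = 1 := by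
    rw [Finset.sum_eq_single 0]
    · simp
    · intro b _ hb; simp [hb]
    · intro hc; exact absurd (Finset.mem_range.mpr (by omega)) hc
  rw [hsec]
  have hterm : ∀ j : ℕ, (k.choose j : ℂ) * ((2 ^ (j + 1) - 1 : ℂ) / ((j : ℂ) + 1) * (bernoulli (j + 1) : ℂ))
      = ((k + 1).choose (j + 1) : ℂ) * ((2 ^ (j + 1) - 1) * (bernoulli (j + 1) : ℂ)) / ((k : ℂ) + 1) := by
    intro j
    have hcc : (k + 1) * k.choose j = (k + 1).choose (j + 1) * (j + 1) := Nat.add_one_mul_choose_eq k j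
    have hq : ((k : ℂ) + 1) * (k.choose j : ℂ) = ((k + 1).choose (j + 1) : ℂ) * ((j : ℂ) + 1) := by
      exact_mod_cast hcc
    have hj1 : ((j : ℂ) + 1) ≠ 0 := by
      intro h
      have : ((j : ℂ) + 1) = ((j + 1 : ℕ) : ℂ) := by push_cast; ring
      rw [this] at h
      exact_mod_cast h
    field_simp
    linear_combination ((2 ^ (j + 1) - 1) * (bernoulli (j + 1) : ℂ)) * hq
  simp_rw [hterm]
  rw [← Finset.sum_div]
  have hv := sumvC (k + 1) (by omega)
  rw [Finset.sum_range_succ'] at hv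
  norm_num at hv
  field_simp
  simp only [← mul_assoc] at hv
  linear_combination hv

open Finset Nat in
theorem summability_method_alternating_powers
    (D : Submodule ℂ (ℕ → ℂ)) (S : D →ₗ[ℂ] ℂ)
    (hshift : ∀ a : ℕ → ℂ, a ∈ D → (fun n => a (n + 1)) ∈ D)
    (htrans : ∀ (a : ℕ → ℂ) (ha : a ∈ D),
      S ⟨a, ha⟩ = a 0 + S ⟨fun n => a (n + 1), hshift a ha⟩)
    (hσ : ∀ k : ℕ, (fun n : ℕ => (-1 : ℂ) ^ n * ((n : ℂ) + 1) ^ k) ∈ D) :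
    S ⟨fun n : ℕ => (-1 : ℂ) ^ n * ((n : ℂ) + 1) ^ (0 : ℕ), hσ 0⟩ = 1 / 2 ∧
    ∀ k : ℕ, 1 ≤ k →
      S ⟨fun n : ℕ => (-1 : ℂ) ^ n * ((n : ℂ) + 1) ^ k, hσ k⟩ =
        ((2 ^ (k + 1) - 1 : ℂ) / (k + 1)) * (bernoulli (k + 1) : ℂ) := by
  set σ : ℕ → D := fun k => ⟨fun n : ℕ => (-1 : ℂ) ^ n * ((n : ℂ) + 1) ^ k, hσ k⟩ with hσdef
  set s : ℕ → ℂ := fun k => S (σ k) with hsdef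
  have hrec : ∀ k : ℕ, s k + ∑ j ∈ range (k + 1), (k.choose j : ℂ) * s j = 1 := by
    intro k
    have h1 : s k = (fun n : ℕ => (-1 : ℂ) ^ n * ((n : ℂ) + 1) ^ k) 0
        + S ⟨fun n => (fun n : ℕ => (-1 : ℂ) ^ n * ((n : ℂ) + 1) ^ k) (n + 1), hshift _ (hσ k)⟩ :=
      htrans _ (hσ k)
    have h2 : (⟨fun n => (fun n : ℕ => (-1 : ℂ) ^ n * ((n : ℂ) + 1) ^ k) (n + 1),
        hshift _ (hσ k)⟩ : D) = -∑ j ∈ range (k + 1), (k.choose j : ℂ) • σ j := by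
      apply Subtype.ext
      have hcoe : ((∑ j ∈ range (k + 1), (k.choose j : ℂ) • σ j : D) : ℕ → ℂ)
          = ∑ j ∈ range (k + 1), (k.choose j : ℂ) • ((σ j : D) : ℕ → ℂ) := by
        push_cast
        rfl
      simp only [Submodule.coe_neg, hcoe]
      funext n
      simp only [Finset.sum_apply, Pi.neg_apply, Pi.smul_apply, smul_eq_mul, hσdef]
      push_cast
      rw [show ((n : ℂ) + 1 + 1) ^ k = (((n : ℂ) + 1) + 1) ^ k by ring, add_pow]
      rw [Finset.mul_sum, ← Finset.sum_neg_distrib]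
      refine Finset.sum_congr rfl fun j _ => by ring
    rw [h2] at h1
    simp only [map_neg, map_sum, map_smul, smul_eq_mul] at h1
    rw [h1, hsdef]
    norm_num
  set c : ℕ → ℂ := fun j => if j = 0 then 1/2
      else (2 ^ (j + 1) - 1 : ℂ) / ((j : ℂ) + 1) * (bernoulli (j + 1) : ℂ) with hcdef
  have hkeyC : ∀ k : ℕ, 1 ≤ k →
      (∑ j ∈ range (k + 1), (k.choose j : ℂ) * c j)
        + (2 ^ (k + 1) - 1 : ℂ) / ((k : ℂ) + 1) * (bernoulli (k + 1) : ℂ) = 1 := by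
    intro k hk
    exact keyC k hk
  have hc0 : c 0 = 1/2 := by simp only [hcdef]; norm_num
  have hsc : ∀ k : ℕ, s k = c k := by
    intro k
    induction k using Nat.strong_induction_on with
    | _ k ih =>
      rcases Nat.eq_zero_or_pos k with hk0 | hk1
      · subst hk0
        have h := hrec 0
        rw [Finset.sum_range_one] at h
        norm_num at h
        rw [hc0]
        linear_combination h / 2
      · have h := hrec k
        rw [Finset.sum_range_succ, Nat.choose_self, Nat.cast_one, one_mul] at h
        have hsum : ∑ j ∈ range k, (k.choose j : ℂ) * s j
            = ∑ j ∈ range k, (k.choose j : ℂ) * c j :=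
          Finset.sum_congr rfl fun j hj => by rw [ih j (Finset.mem_range.mp hj)]
        rw [hsum] at h
        have hc := hkeyC k hk1
        rw [Finset.sum_range_succ, Nat.choose_self, Nat.cast_one, one_mul] at hc
        have hck : c k = (2 ^ (k + 1) - 1 : ℂ) / ((k : ℂ) + 1) * (bernoulli (k + 1) : ℂ) := by
          simp only [hcdef, if_neg (by omega : ¬ k = 0)]
        rw [hck]
        rw [hck] at hc
        linear_combination (h - hc) / 2
  constructor
  · have h := hsc 0
    rw [hc0] at h
    exact h
  · intro k hk
    have h := hsc k
    rw [show c k = (2 ^ (k + 1) - 1 : ℂ) / ((k : ℂ) + 1) * (bernoulli (k + 1) : ℂ) by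
      simp only [hcdef, if_neg (by omega : ¬ k = 0)]] at h
    exact h
end

section
/- For all positive integers a and k, the Bernoulli numbers satisfy ((2^{k+1} - 1)/(k+1)) · B_{k+1} = Σ_{n=0}^{a-1} (-1)^n (n+1)^k + ((-1)^a / 2) · a^k + (-1)^a · Σ_{j=1}^{k} (k choose j) · a^{k-j} · ((2^{j+1} - 1)/(j+1)) · B_{j+1}. -/
/-!
Write `d j = (2^(j+1) - 1) B_(j+1) / (j+1)`. As `∑ Bₙ tⁿ/n! = t/(eᵗ - 1)`, the exponential
generating function of `d` is `(B(2t) - B(t))/t = -1/(eᵗ + 1)`, so that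
`P k x = ∑ⱼ (k choose j) d j x^(k-j)`, which is `k!` times the `k`-th coefficient of
`-e^(xt)/(eᵗ + 1)`, satisfies `P k (x + 1) + P k x = -x^k`. Hence `Q x = x^k + P k x` satisfies
`Q (n + 1) + Q n = (n + 1)^k`, and summing `(-1)ⁿ (Q (n + 1) + Q n)` over `n < a` telescopes to
`Q 0 - (-1)^a Q a`, where `Q 0 = d k` for `k ≥ 1`.
-/

open Finset Nat PowerSeries

theorem sum_choose_mul_pow_mul_eq_factorial_mul_coeff {K : Type*} [Field K] [Algebra ℚ K]
    (c : ℕ → K) (x : K) (k : ℕ) :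
    ∑ j ∈ range (k + 1), (k.choose j : K) * x ^ (k - j) * c j =
      k ! * coeff k (PowerSeries.mk (fun j => c j / j !) * rescale x (exp K)) := by
  have := algebraRat.charZero K
  rw [coeff_mul, Nat.sum_antidiagonal_eq_sum_range_succ_mk, mul_sum]
  refine sum_congr rfl fun j hj => ?_
  simp only [coeff_mk, coeff_rescale, coeff_exp, map_div₀, map_one, map_natCast]
  rw [Nat.cast_choose K (mem_range_succ_iff.mp hj)]
  field_simp

theorem eq_sum_range_neg_one_pow_mul_add {R : Type*} [CommRing R] (f : ℕ → R) (a : ℕ) :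
    f 0 = ∑ n ∈ range a, (-1) ^ n * (f (n + 1) + f n) + (-1) ^ a * f a := by
  induction a with
  | zero => simp
  | succ a ih => rw [sum_range_succ, pow_succ]; linear_combination ih

/-- `-Eⱼ(0)/2` for the Euler polynomial `Eⱼ`. -/
noncomputable def negHalfEulerZero (j : ℕ) : ℚ :=
  (2 ^ (j + 1) - 1) / (j + 1) * bernoulli (j + 1)

noncomputable def negHalfEulerZeroEGF : ℚ⟦X⟧ :=
  PowerSeries.mk fun j => negHalfEulerZero j / j !

theorem X_mul_negHalfEulerZeroEGF :
    X * negHalfEulerZeroEGF = rescale 2 (bernoulliPowerSeries ℚ) - bernoulliPowerSeries ℚ := by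
  ext (_ | n)
  · rw [coeff_zero_X_mul, map_sub, coeff_rescale]
    simp [bernoulliPowerSeries]
  · rw [coeff_succ_X_mul, map_sub, coeff_rescale]
    simp only [negHalfEulerZeroEGF, bernoulliPowerSeries, negHalfEulerZero, coeff_mk,
      factorial_succ, cast_mul, cast_succ, Algebra.algebraMap_self, RingHom.id_apply]
    field_simp

theorem negHalfEulerZeroEGF_mul_exp_add_one : negHalfEulerZeroEGF * (exp ℚ + 1) = -1 := by
  have hX : (X : ℚ⟦X⟧) * (exp ℚ - 1) ≠ 0 := by
    refine mul_ne_zero X_ne_zero fun h => ?_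
    simpa using congrArg (coeff 1) h
  refine mul_left_cancel₀ hX ?_
  have hsq : exp ℚ ^ 2 - 1 = rescale 2 (exp ℚ - 1) := by
    rw [map_sub, map_one, show (2 : ℚ) = (2 : ℕ) by norm_num, ← exp_pow_eq_rescale_exp]
  calc X * (exp ℚ - 1) * (negHalfEulerZeroEGF * (exp ℚ + 1))
      = (X * negHalfEulerZeroEGF) * (exp ℚ ^ 2 - 1) := by ring
    _ = rescale 2 (bernoulliPowerSeries ℚ * (exp ℚ - 1))
          - bernoulliPowerSeries ℚ * (exp ℚ - 1) * (exp ℚ + 1) := by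
        rw [X_mul_negHalfEulerZeroEGF, map_mul, ← hsq]; ring
    _ = X * (exp ℚ - 1) * -1 := by
        rw [bernoulliPowerSeries_mul_exp_sub_one, rescale_X, map_ofNat]; ring

/-- `-Eₖ(x)/2` for the Euler polynomial `Eₖ`. -/
noncomputable def negHalfEulerPoly (k : ℕ) (x : ℚ) : ℚ :=
  ∑ j ∈ range (k + 1), (k.choose j : ℚ) * x ^ (k - j) * negHalfEulerZero j

theorem negHalfEulerPoly_add_one_add_self (k : ℕ) (x : ℚ) :
    negHalfEulerPoly k (x + 1) + negHalfEulerPoly k x = -x ^ k := by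
  simp only [negHalfEulerPoly, sum_choose_mul_pow_mul_eq_factorial_mul_coeff, ← mul_add,
    ← map_add, ← exp_mul_exp_eq_exp_add, rescale_one, RingHom.id_apply]
  have hEGF : negHalfEulerZeroEGF * (rescale x (exp ℚ) * exp ℚ + rescale x (exp ℚ)) =
      -rescale x (exp ℚ) := by
    linear_combination rescale x (exp ℚ) * negHalfEulerZeroEGF_mul_exp_add_one
  rw [← negHalfEulerZeroEGF, hEGF, map_neg, coeff_rescale, coeff_exp]
  simp
  field_simp

theorem negHalfEulerPoly_zero (k : ℕ) : negHalfEulerPoly k 0 = negHalfEulerZero k := by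
  rw [negHalfEulerPoly, sum_range_succ, sum_eq_zero fun j hj => ?_]
  · simp
  · simp [zero_pow (Nat.sub_ne_zero_of_lt (mem_range.mp hj))]

theorem negHalfEulerPoly_eq_neg_half_pow_add_sum_Icc (k : ℕ) (x : ℚ) :
    negHalfEulerPoly k x =
      -x ^ k / 2 + ∑ j ∈ Icc 1 k, (k.choose j : ℚ) * x ^ (k - j) * negHalfEulerZero j := by
  rw [negHalfEulerPoly, range_succ_eq_Icc_zero, ← insert_Icc_add_one_left_eq_Icc (zero_le k),
    sum_insert (by simp)]
  simp [negHalfEulerZero, bernoulli_one]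
  ring

theorem bernoulli_recursion_general_general (a k : ℕ) (hk : 1 ≤ k) :
    ((2 ^ (k + 1) - 1 : ℚ) / (k + 1)) * bernoulli (k + 1) =
      (∑ n ∈ Finset.range a, (-1 : ℚ) ^ n * ((n : ℚ) + 1) ^ k)
      + ((-1 : ℚ) ^ a / 2) * (a : ℚ) ^ k
      + (-1 : ℚ) ^ a * ∑ j ∈ Finset.Icc 1 k,
          (k.choose j : ℚ) * (a : ℚ) ^ (k - j) * ((2 ^ (j + 1) - 1) / (j + 1))
            * bernoulli (j + 1) := by
  have hstep (n : ℕ) : ((n : ℚ) + 1) ^ k + negHalfEulerPoly k (n + 1)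
      + ((n : ℚ) ^ k + negHalfEulerPoly k n) = ((n : ℚ) + 1) ^ k := by
    linear_combination negHalfEulerPoly_add_one_add_self k n
  have h := eq_sum_range_neg_one_pow_mul_add (fun n : ℕ => (n : ℚ) ^ k + negHalfEulerPoly k n) a
  simp only [cast_add, cast_one, hstep, cast_zero, zero_pow (by omega : k ≠ 0), zero_add,
    negHalfEulerPoly_zero] at h
  rw [negHalfEulerPoly_eq_neg_half_pow_add_sum_Icc] at h
  simp only [negHalfEulerZero, mul_assoc] at h ⊢
  linear_combination h

theorem bernoulli_recursion_general (a k : ℕ) (ha : 1 ≤ a) (hk : 1 ≤ k) :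
    ((2 ^ (k + 1) - 1 : ℚ) / (k + 1)) * bernoulli (k + 1) =
      (∑ n ∈ Finset.range a, (-1 : ℚ) ^ n * ((n : ℚ) + 1) ^ k)
      + ((-1 : ℚ) ^ a / 2) * (a : ℚ) ^ k
      + (-1 : ℚ) ^ a * ∑ j ∈ Finset.Icc 1 k,
          (k.choose j : ℚ) * (a : ℚ) ^ (k - j) * ((2 ^ (j + 1) - 1) / (j + 1))
            * bernoulli (j + 1) :=
  bernoulli_recursion_general_general a k hk
end

section
/- For every integer k ≥ 1, Σ_{j=1}^{k} (k choose j) · 2^j · ((2^{j+1} - 1)/(j+1)) · B_{j+1} = 1/2 - (-1)^{⌊k/2⌋} · E_k / 2, relating Bernoulli and Euler numbers. -/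
open PowerSeries Nat Finset Filter Topology
open scoped ContDiff

namespace PowerSeries

variable {K : Type*} [Field K]

noncomputable def egf (a : ℕ → K) : K⟦X⟧ := mk fun n => a n / n !

@[simp]
lemma coeff_egf (a : ℕ → K) (n : ℕ) : coeff n (egf a) = a n / n ! := coeff_mk _ _

variable [CharZero K]

lemma egf_mul (a b : ℕ → K) :
    egf a * egf b = egf fun n => ∑ j ∈ range (n + 1), (n.choose j : K) * a j * b (n - j) := by
  ext n
  rw [coeff_mul, Nat.sum_antidiagonal_eq_sum_range_succ_mk, coeff_egf, sum_div]
  refine sum_congr rfl fun j hj => ?_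
  rw [coeff_egf, coeff_egf, Nat.cast_choose K (Nat.lt_succ_iff.mp (mem_range.mp hj))]
  have := n.factorial_ne_zero
  field_simp

lemma exp_eq_egf_one : exp K = egf fun _ => 1 := by
  ext n
  simp [coeff_exp]

end PowerSeries

def bernoulliEulerCoeff (j : ℕ) : ℚ := 2 ^ j * ((2 ^ (j + 1) - 1) / (j + 1)) * bernoulli (j + 1)

section BernoulliSeries

variable {K : Type*} [Field K] [CharZero K]

lemma rescale_bernoulliPowerSeries_mul_exp_pow_sub_one (c : ℕ) :
    rescale (c : K) (bernoulliPowerSeries K) * (exp K ^ c - 1) = (c : K⟦X⟧) * X := by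
  rw [exp_pow_eq_rescale_exp, ← map_one (rescale (c : K)), ← map_sub, ← map_mul,
    bernoulliPowerSeries_mul_exp_sub_one, rescale_X, map_natCast]

lemma two_mul_X_mul_egf_bernoulliEulerCoeff :
    2 * X * egf (fun j => (bernoulliEulerCoeff j : K))
      = rescale 4 (bernoulliPowerSeries K) - rescale 2 (bernoulliPowerSeries K) := by
  ext (_ | n)
  · simp [bernoulliPowerSeries, rescale_mk, constantCoeff_mk]
  · rw [mul_comm 2 X, mul_assoc, coeff_succ_X_mul, ← map_ofNat C 2, coeff_C_mul]
    simp only [coeff_egf, map_sub, coeff_rescale, bernoulliPowerSeries, coeff_mk,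
      bernoulliEulerCoeff, factorial_succ, eq_ratCast]
    push_cast
    field_simp
    rw [show (4 : K) = 2 ^ 2 by norm_num, ← pow_mul]
    ring

lemma egf_bernoulliEulerCoeff_mul_exp_sq_add_one :
    egf (fun j => (bernoulliEulerCoeff j : K)) * (exp K ^ 2 + 1) = -1 := by
  have h2 := rescale_bernoulliPowerSeries_mul_exp_pow_sub_one (K := K) 2
  have h4 := rescale_bernoulliPowerSeries_mul_exp_pow_sub_one (K := K) 4
  push_cast at h2 h4
  have hne : (2 * X * (exp K ^ 2 - 1) : K⟦X⟧) ≠ 0 := by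
    have two_ne : (2 : K⟦X⟧) ≠ 0 := by rw [← map_ofNat C 2]; simp
    refine mul_ne_zero (mul_ne_zero two_ne X_ne_zero) fun h => ?_
    have := congrArg (coeff 1) h
    rw [exp_pow_eq_rescale_exp] at this
    simp [coeff_exp] at this
  have key : 2 * X * (exp K ^ 2 - 1)
      * (egf (fun j => (bernoulliEulerCoeff j : K)) * (exp K ^ 2 + 1) + 1) = 0 := by
    linear_combination (exp K ^ 4 - 1) * two_mul_X_mul_egf_bernoulliEulerCoeff (K := K)
      + h4 - (exp K ^ 2 + 1) * h2
  linear_combination (mul_eq_zero.mp key).resolve_left hne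

end BernoulliSeries

section TaylorSeries

variable {𝕜 : Type*} [NontriviallyNormedField 𝕜] {f g : 𝕜 → 𝕜} {x : 𝕜}

noncomputable def taylorSeries (f : 𝕜 → 𝕜) (x : 𝕜) : 𝕜⟦X⟧ := egf fun n => iteratedDeriv n f x

lemma Filter.EventuallyEq.taylorSeries_eq (h : f =ᶠ[𝓝 x] g) :
    taylorSeries f x = taylorSeries g x := by
  simp only [taylorSeries, h.iteratedDeriv_eq]

lemma taylorSeries_one : taylorSeries (fun _ => 1) x = 1 := by
  ext (_ | n) <;> simp [taylorSeries, iteratedDeriv_const, coeff_one]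

lemma taylorSeries_mul [CharZero 𝕜] (hf : ContDiffAt 𝕜 ∞ f x) (hg : ContDiffAt 𝕜 ∞ g x) :
    taylorSeries (fun y => f y * g y) x = taylorSeries f x * taylorSeries g x := by
  simp only [taylorSeries, egf_mul]
  congr 1
  funext n
  exact iteratedDeriv_fun_mul (hf.of_le (by exact_mod_cast le_top))
    (hg.of_le (by exact_mod_cast le_top))

lemma taylorSeries_inv_mul_self [CharZero 𝕜] (hf : ContDiffAt 𝕜 ∞ f x) (hx : f x ≠ 0) :
    taylorSeries (fun y => (f y)⁻¹) x * taylorSeries f x = 1 := by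
  have hinv : ContDiffAt 𝕜 ∞ (fun y => (f y)⁻¹) x := hf.inv hx
  rw [← taylorSeries_mul hinv hf, ← taylorSeries_one (x := x)]
  refine Filter.EventuallyEq.taylorSeries_eq ?_
  filter_upwards [hf.continuousAt.eventually_ne hx] with y hy using inv_mul_cancel₀ hy

end TaylorSeries

lemma taylorSeries_cos : taylorSeries Real.cos 0 = PowerSeries.cos ℝ := by
  ext n
  obtain ⟨m, rfl | rfl⟩ := Nat.even_or_odd' n <;> simp [taylorSeries, PowerSeries.cos]

section SecantSeries

open Complex

lemma two_mul_rescale_I_cos :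
    2 * rescale I (PowerSeries.cos ℂ) = exp ℂ + evalNegHom (exp ℂ) := by
  ext n
  rw [← map_ofNat C 2, coeff_C_mul]
  obtain ⟨m, rfl | rfl⟩ := Nat.even_or_odd' n
  · simp [PowerSeries.cos, coeff_rescale, evalNegHom, coeff_exp, pow_mul]
    simp only [← mul_div_assoc, ← mul_pow, mul_neg, mul_one, neg_neg, one_pow]
    ring
  · simp [PowerSeries.cos, coeff_rescale, evalNegHom, coeff_exp, pow_succ, pow_mul]

lemma neg_one_pow_div_two_mul_eq_of_I_pow_mul_eq {k : ℕ} {x y : ℝ} (h : I ^ k * x = y) :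
    (-1) ^ (k / 2) * x = y := by
  obtain ⟨m, rfl | rfl⟩ := Nat.even_or_odd' k
  · rw [pow_mul, I_sq] at h
    rw [Nat.mul_div_cancel_left m two_pos]
    exact_mod_cast h
  · rw [pow_succ, pow_mul, I_sq] at h
    have h' : (((-1) ^ m * x : ℝ) : ℂ) * I = y := by push_cast; linear_combination h
    have him := congrArg im h'
    have hre := congrArg re h'
    simp only [mul_im, ofReal_re, I_im, ofReal_im, I_re, mul_zero, mul_one, add_zero, mul_re,
      sub_zero] at him hre
    rw [show (2 * m + 1) / 2 = m by omega, ← hre, him]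

lemma rescale_I_map_taylorSeries_sec :
    rescale I (map ofRealHom (taylorSeries (fun x => (Real.cos x)⁻¹) 0))
      = -2 * egf (fun j => (bernoulliEulerCoeff j : ℂ)) * exp ℂ := by
  have hsec := taylorSeries_inv_mul_self (x := 0) Real.contDiff_cos.contDiffAt (by simp)
  rw [taylorSeries_cos] at hsec
  have hsecI := congrArg (fun p => rescale I (map ofRealHom p)) hsec
  simp only [map_mul, map_cos, map_one] at hsecI
  refine left_inv_eq_right_inv hsecI ?_
  linear_combination
    (-egf (fun j => (bernoulliEulerCoeff j : ℂ)) * exp ℂ) * two_mul_rescale_I_cos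
      - egf (fun j => (bernoulliEulerCoeff j : ℂ)) * exp_mul_exp_neg_eq_one (A := ℂ)
      - egf_bernoulliEulerCoeff_mul_exp_sq_add_one (K := ℂ)

lemma I_pow_mul_eulerNumber (k : ℕ) :
    I ^ k * eulerNumber k
      = ((-2 * ∑ j ∈ range (k + 1), (k.choose j : ℝ) * bernoulliEulerCoeff j : ℝ) : ℂ) := by
  have h := congrArg (coeff k) rescale_I_map_taylorSeries_sec
  rw [exp_eq_egf_one, mul_assoc, egf_mul, ← map_ofNat C 2, ← map_neg, coeff_C_mul] at h
  simp only [coeff_rescale, coeff_map, taylorSeries, coeff_egf, mul_one, ofRealHom_eq_coe,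
    ofReal_div, ofReal_natCast, ← eulerNumber.eq_1] at h
  have := k.factorial_ne_zero
  field_simp at h
  push_cast
  linear_combination h

end SecantSeries

theorem bernoulli_euler_relation_general (k : ℕ) :
    ∑ j ∈ Finset.Icc 1 k,
        (k.choose j : ℝ) * 2 ^ j * ((2 ^ (j + 1) - 1) / (j + 1)) * (bernoulli (j + 1) : ℝ)
      = 1 / 2 - (-1 : ℝ) ^ (k / 2) * eulerNumber k / 2 := by
  have h := neg_one_pow_div_two_mul_eq_of_I_pow_mul_eq (I_pow_mul_eulerNumber k)
  rw [range_eq_Ico, sum_eq_sum_Ico_succ_bot (by omega : 0 < k + 1), zero_add,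
    Ico_add_one_right_eq_Icc] at h
  simp only [bernoulliEulerCoeff, mul_assoc] at h ⊢
  push_cast at h
  norm_num [bernoulli_one] at h
  linarith

theorem bernoulli_euler_relation (k : ℕ) (hk : 1 ≤ k) :
    ∑ j ∈ Finset.Icc 1 k,
        (k.choose j : ℝ) * 2 ^ j * ((2 ^ (j + 1) - 1) / (j + 1)) * (bernoulli (j + 1) : ℝ)
      = 1 / 2 - (-1 : ℝ) ^ (k / 2) * eulerNumber k / 2 :=
  bernoulli_euler_relation_general k
end

section
/- For |z| < π, z·cot(z) = Σ_{k≥0} B_{2k} (-1)^k 2^{2k} z^{2k} / (2k)!, where B_{2k} are the Bernoulli numbers. -/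
open Complex Real
open scoped Nat

/-!
Put x = 2iz, so that z cot z = x / (eˣ - 1) + x / 2. The formal identity
B(X) (eˣ - 1) = X for the exponential generating function B of the Bernoulli numbers becomes an
identity of convergent series through the Cauchy product, as soon as ∑ Bₙ xⁿ / n! converges
absolutely. This holds for |x| < 2π, because |B₂ₘ| / (2m)! = 2 ζ(2m) / (2π)²ᵐ and
ζ(2m) ≤ ζ(2) < 2. Finally B₁ x = -x / 2 cancels the added x / 2, and all other odd Bernoulli
numbers vanish, which leaves the even series.
-/

lemma tsum_one_div_nat_pow_le_two {k : ℕ} (hk : 2 ≤ k) : ∑' n : ℕ, 1 / (n : ℝ) ^ k ≤ 2 := by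
  calc ∑' n : ℕ, 1 / (n : ℝ) ^ k
      ≤ ∑' n : ℕ, 1 / (n : ℝ) ^ 2 := by
        refine Summable.tsum_le_tsum (fun n => ?_) (Real.summable_one_div_nat_pow.2 hk)
          (Real.summable_one_div_nat_pow.2 one_lt_two)
        rcases n.eq_zero_or_pos with rfl | hn
        · simp [zero_pow (by omega : k ≠ 0)]
        · gcongr
          exact_mod_cast hn
    _ = π ^ 2 / 6 := hasSum_zeta_two.tsum_eq
    _ ≤ 2 := by nlinarith [pi_lt_d2, pi_pos]

lemma abs_bernoulli_two_mul_div_factorial {m : ℕ} (hm : m ≠ 0) :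
    |(bernoulli (2 * m) : ℝ)| / (2 * m)! =
      2 * (∑' n : ℕ, 1 / (n : ℝ) ^ (2 * m)) / (2 * π) ^ (2 * m) := by
  have hζ := hasSum_zeta_nat hm
  have hpow : (2 : ℝ) ^ (2 * m) = 2 * 2 ^ (2 * m - 1) := by
    rw [← pow_succ']; congr 1; omega
  have hc : 0 < (2 : ℝ) ^ (2 * m - 1) * π ^ (2 * m) / (2 * m)! := by positivity
  have hsign : 0 ≤ (-1 : ℝ) ^ (m + 1) * bernoulli (2 * m) := by
    refine nonneg_of_mul_nonneg_left ?_ hc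
    convert hζ.nonneg fun n => by positivity using 1
    ring
  have habs : |(bernoulli (2 * m) : ℝ)| = (-1 : ℝ) ^ (m + 1) * bernoulli (2 * m) := by
    rw [← abs_of_nonneg hsign, abs_mul, abs_pow, abs_neg, abs_one, one_pow, one_mul]
  rw [hζ.tsum_eq, habs, mul_pow, hpow]
  field_simp

lemma abs_bernoulli_div_factorial_le (n : ℕ) :
    |(bernoulli n : ℝ)| / n ! ≤ 4 / (2 * π) ^ n := by
  obtain ⟨m, rfl | rfl⟩ := n.even_or_odd'
  · rcases eq_or_ne m 0 with rfl | hm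
    · norm_num
    · rw [abs_bernoulli_two_mul_div_factorial hm]
      gcongr
      linarith [tsum_one_div_nat_pow_le_two (k := 2 * m) (by omega)]
  · rcases eq_or_ne m 0 with rfl | hm
    · rw [div_le_div_iff₀ (by simp) (by positivity)]
      norm_num [bernoulli_one]
      linarith [pi_le_four]
    · rw [bernoulli_eq_zero_of_odd (odd_two_mul_add_one m) (by omega)]
      simp only [Rat.cast_zero, abs_zero, zero_div]
      positivity

lemma summable_norm_bernoulli_mul_pow_div_factorial {x : ℂ} (hx : ‖x‖ < 2 * π) :
    Summable fun n => ‖(bernoulli n : ℂ) * x ^ n / (n ! : ℂ)‖ := by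
  have hr : ‖x‖ / (2 * π) < 1 := (div_lt_one (by positivity)).2 hx
  refine .of_nonneg_of_le (fun _ => norm_nonneg _) (fun n => ?_)
    ((summable_geometric_of_lt_one (by positivity) hr).mul_left 4)
  calc ‖(bernoulli n : ℂ) * x ^ n / (n ! : ℂ)‖
      = |(bernoulli n : ℝ)| / n ! * ‖x‖ ^ n := by
        rw [norm_div, norm_mul, norm_pow, Complex.norm_natCast, norm_ratCast]; ring
    _ ≤ 4 / (2 * π) ^ n * ‖x‖ ^ n :=
        mul_le_mul_of_nonneg_right (abs_bernoulli_div_factorial_le n) (by positivity)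
    _ = 4 * (‖x‖ / (2 * π)) ^ n := by rw [div_pow]; ring

namespace PowerSeries

theorem tsum_mul_tsum_eq_tsum_coeff_mul_pow {R : Type*} [NormedCommRing R] [CompleteSpace R]
    (p q : R⟦X⟧) (x : R) (hp : Summable fun n => ‖coeff n p * x ^ n‖)
    (hq : Summable fun n => ‖coeff n q * x ^ n‖) :
    (∑' n, coeff n p * x ^ n) * (∑' n, coeff n q * x ^ n) = ∑' n, coeff n (p * q) * x ^ n := by
  rw [tsum_mul_tsum_eq_tsum_sum_antidiagonal_of_summable_norm hp hq]
  refine tsum_congr fun n => ?_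
  rw [coeff_mul, Finset.sum_mul]
  refine Finset.sum_congr rfl fun kl hkl => ?_
  rw [← Finset.HasAntidiagonal.mem_antidiagonal.1 hkl, pow_add]
  ring

end PowerSeries

lemma Complex.exp_ne_one_of_norm_lt_two_pi {x : ℂ} (hx0 : x ≠ 0) (hx : ‖x‖ < 2 * π) :
    exp x ≠ 1 := by
  intro h
  obtain ⟨n, rfl⟩ := exp_eq_one_iff.1 h
  have hn : n ≠ 0 := by rintro rfl; simp at hx0
  have : (1 : ℝ) ≤ |(n : ℝ)| := by exact_mod_cast Int.one_le_abs hn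
  simp only [norm_mul, norm_intCast, norm_I, norm_real, Complex.norm_ofNat,
    Real.norm_of_nonneg pi_pos.le, mul_one] at hx
  nlinarith [pi_pos]

open PowerSeries in
theorem hasSum_bernoulli_mul_pow_div_factorial {x : ℂ} (hx0 : x ≠ 0) (hx : ‖x‖ < 2 * π) :
    HasSum (fun n => (bernoulli n : ℂ) * x ^ n / (n ! : ℂ)) (x / (Complex.exp x - 1)) := by
  have hB : ∀ n,
      coeff n (bernoulliPowerSeries ℂ) * x ^ n = (bernoulli n : ℂ) * x ^ n / n ! := by
    intro n
    simp only [bernoulliPowerSeries, coeff_mk, map_div₀, eq_ratCast, map_natCast]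
    ring
  have hE : ∀ n, coeff n (exp ℂ) * x ^ n = x ^ n / n ! := by
    intro n
    simp only [PowerSeries.coeff_exp, one_div, map_inv₀, map_natCast]
    ring
  have hX : ∀ n, coeff n (X : ℂ⟦X⟧) * x ^ n = if n = 1 then x else 0 := by
    intro n
    split_ifs with h <;> simp [coeff_X, h]
  have hBs : Summable fun n => ‖coeff n (bernoulliPowerSeries ℂ) * x ^ n‖ := by
    simpa only [hB] using summable_norm_bernoulli_mul_pow_div_factorial hx
  have hEs : Summable fun n => ‖coeff n (exp ℂ) * x ^ n‖ := by
    simpa only [hE, norm_div, norm_pow, Complex.norm_natCast] using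
      Real.summable_pow_div_factorial ‖x‖
  have hBexp : bernoulliPowerSeries ℂ * exp ℂ = X + bernoulliPowerSeries ℂ := by
    rw [← bernoulliPowerSeries_mul_exp_sub_one]; ring
  have hprod := tsum_mul_tsum_eq_tsum_coeff_mul_pow _ _ x hBs hEs
  rw [hBexp] at hprod
  simp only [map_add, add_mul, hB, hE, hX] at hprod
  have hsum := (summable_norm_bernoulli_mul_pow_div_factorial hx).of_norm
  have hexp : ∑' n : ℕ, x ^ n / (n ! : ℂ) = Complex.exp x := by
    rw [Complex.exp_eq_exp_ℂ]; exact (NormedSpace.expSeries_div_hasSum_exp x).tsum_eq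
  rw [hexp, Summable.tsum_add (hasSum_ite_eq 1 x).summable hsum, tsum_ite_eq] at hprod
  have hne : Complex.exp x - 1 ≠ 0 :=
    sub_ne_zero.2 (Complex.exp_ne_one_of_norm_lt_two_pi hx0 hx)
  have htsum : ∑' n : ℕ, (bernoulli n : ℂ) * x ^ n / (n ! : ℂ) = x / (Complex.exp x - 1) :=
    (eq_div_iff hne).2 (by linear_combination hprod)
  exact htsum ▸ hsum.hasSum

lemma Complex.mul_cot_eq_div_exp_sub_one_add (z : ℂ) (h : exp (2 * I * z) ≠ 1) :
    z * cot z = 2 * I * z / (exp (2 * I * z) - 1) + I * z := by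
  rw [cot_eq_exp_ratio]
  generalize exp (2 * I * z) = w at h ⊢
  have h₁ : w - 1 ≠ 0 := sub_ne_zero.2 h
  have h₂ : 1 - w ≠ 0 := sub_ne_zero.2 h.symm
  field_simp
  linear_combination (z * w ^ 2 - z) * I_sq

lemma hasSum_comp_two_mul_iff {M : Type*} [AddCommMonoid M] [TopologicalSpace M] {f : ℕ → M}
    {a : M} (hf : ∀ n, Odd n → f n = 0) : HasSum (fun k => f (2 * k)) a ↔ HasSum f a :=
  (mul_right_injective₀ two_ne_zero).hasSum_iff fun n hn =>
    hf n (Nat.not_even_iff_odd.1 fun ⟨k, hk⟩ => hn ⟨k, by dsimp only; omega⟩)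

theorem hasSum_bernoulli_two_mul_mul_pow_div_factorial {x : ℂ} (hx0 : x ≠ 0)
    (hx : ‖x‖ < 2 * π) :
    HasSum (fun k => (bernoulli (2 * k) : ℂ) * x ^ (2 * k) / ((2 * k)! : ℂ))
      (x / (Complex.exp x - 1) + x / 2) := by
  have hsum := (hasSum_bernoulli_mul_pow_div_factorial hx0 hx).update 1 0
  have hvalue : 0 - (bernoulli 1 : ℂ) * x ^ 1 / (1 ! : ℂ) + x / (Complex.exp x - 1) =
      x / (Complex.exp x - 1) + x / 2 := by
    simp only [bernoulli_one]; push_cast; ring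
  rw [hvalue] at hsum
  refine ((hasSum_comp_two_mul_iff fun n hn => ?_).2 hsum).congr_fun fun k => by
    rw [Function.update_of_ne (by omega)]
  rcases eq_or_ne n 1 with rfl | hn1
  · exact Function.update_self ..
  · rw [Function.update_of_ne hn1, bernoulli_eq_zero_of_odd hn (by have := hn.pos; omega)]
    simp

theorem z_mul_cot_series (z : ℂ) (hz : ‖z‖ < Real.pi) (hz0 : z ≠ 0) :
    HasSum
      (fun k : ℕ => (bernoulli (2 * k) : ℂ) * (-1) ^ k * 2 ^ (2 * k) * z ^ (2 * k)
        / (Nat.factorial (2 * k) : ℂ))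
      (z * Complex.cot z) := by
  have hx : ‖2 * I * z‖ < 2 * π := by simpa using hz
  have hx0 : 2 * I * z ≠ 0 := by simp [hz0]
  have hcot : z * cot z = 2 * I * z / (exp (2 * I * z) - 1) + 2 * I * z / 2 := by
    rw [mul_cot_eq_div_exp_sub_one_add z (exp_ne_one_of_norm_lt_two_pi hx0 hx)]
    ring
  rw [hcot]
  refine (hasSum_bernoulli_two_mul_mul_pow_div_factorial hx0 hx).congr_fun fun k => ?_
  rw [mul_pow, mul_pow, pow_mul I, I_sq]
  ring
end

section
/- For |z| < π/2, tan(z) = Σ_{n≥1} (-1)^{n+1} · 2^{2n}(2^{2n} - 1) · B_{2n} · z^{2n-1} / (2n)!, where B_{2n} are the Bernoulli numbers. -/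
open Real Finset



lemma bern_abs_le (k : ℕ) (hk : k ≠ 0) :
    |(bernoulli (2 * k) : ℝ)| / (Nat.factorial (2*k) : ℝ) ≤ π ^ 2 / 3 / (2 * π) ^ (2 * k) := by
  have h := hasSum_zeta_nat hk
  have h2 := hasSum_zeta_two
  have hS0 : 0 ≤ (-1 : ℝ) ^ (k + 1) * 2 ^ (2 * k - 1) * π ^ (2 * k) *
      bernoulli (2 * k) / (Nat.factorial (2*k) : ℝ) :=
    h.nonneg fun n => by positivity
  have hSle : (-1 : ℝ) ^ (k + 1) * 2 ^ (2 * k - 1) * π ^ (2 * k) *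
      bernoulli (2 * k) / (Nat.factorial (2*k) : ℝ) ≤ π ^ 2 / 6 := by
    refine hasSum_le (fun n => ?_) h h2
    rcases Nat.eq_zero_or_pos n with rfl | hn
    · norm_num [zero_pow (by omega : 2 * k ≠ 0)]
    · gcongr
      · exact Nat.one_le_cast.mpr hn
      · omega
  set S := (-1 : ℝ) ^ (k + 1) * 2 ^ (2 * k - 1) * π ^ (2 * k) *
      bernoulli (2 * k) / (Nat.factorial (2*k) : ℝ) with hSdef
  have hfac : (0:ℝ) < (Nat.factorial (2*k) : ℝ) := by positivity
  have hpow : (0:ℝ) < 2 ^ (2 * k - 1) * π ^ (2 * k) := by positivity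
  have habs : |(bernoulli (2*k) : ℝ)| / (Nat.factorial (2*k) : ℝ) = S / (2 ^ (2 * k - 1) * π ^ (2 * k)) := by
    have : |S| = 2 ^ (2 * k - 1) * π ^ (2 * k) * (|(bernoulli (2*k) : ℝ)| / (Nat.factorial (2*k) : ℝ)) := by
      rw [hSdef]
      rw [abs_div, abs_mul, abs_mul, abs_mul, abs_pow, abs_neg, abs_one, one_pow, one_mul,
        abs_pow, abs_pow, abs_of_nonneg (by norm_num : (0:ℝ) ≤ 2),
        abs_of_nonneg pi_pos.le, abs_of_nonneg hfac.le]
      ring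
    rw [abs_of_nonneg hS0] at this
    rw [this]
    field_simp
  rw [habs]
  rw [div_le_div_iff₀ hpow (by positivity)]
  have h2pow : (2:ℝ) ^ (2*k-1) * (2:ℝ) = 2 ^ (2*k) := by
    rw [← pow_succ]
    congr 1
    omega
  have hmul : (2*π) ^ (2*k) = 2 ^ (2*k) * π ^ (2*k) := by rw [mul_pow]
  calc S * (2*π)^(2*k) ≤ (π^2/6) * (2^(2*k) * π^(2*k)) := by
        rw [← hmul]; exact mul_le_mul_of_nonneg_right hSle (by positivity)
    _ = π^2/3 * (2^(2*k-1) * π^(2*k)) := by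
        rw [← h2pow]; ring



lemma bern_abs_le' (n : ℕ) :
    |(bernoulli n : ℝ)| / (Nat.factorial n : ℝ) ≤ π ^ 2 / 3 / (2 * π) ^ n := by
  have hpi : (3:ℝ) < π := pi_gt_three
  rcases Nat.even_or_odd n with ⟨k, hkn⟩ | hodd
  · rcases Nat.eq_zero_or_pos k with rfl | hk
    · subst hkn; norm_num; nlinarith
    · have := bern_abs_le k (by omega)
      rwa [(by omega : n = 2 * k)]
  · rcases Nat.lt_or_ge n 2 with hn | hn
    · interval_cases n
      · simp at hodd
      · rw [bernoulli_one]
        push_cast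
        rw [abs_of_nonpos (by norm_num)]
        rw [div_le_div_iff₀ (by norm_num) (by positivity)]
        simp [Nat.factorial]
        nlinarith
    · have : bernoulli n = 0 := by
        rw [bernoulli_eq_bernoulli'_of_ne_one (by omega),
          bernoulli'_eq_zero_of_odd hodd (by omega)]
      simp [this]
      positivity

lemma bern_summable {w : ℂ} (hw : ‖w‖ < 2 * π) :
    Summable (fun n => ‖(bernoulli n : ℂ) / (Nat.factorial n : ℂ) * w ^ n‖) := by
  have hq : ‖w‖ / (2 * π) < 1 := by
    rw [div_lt_one (by positivity)]; exact hw
  have hq0 : 0 ≤ ‖w‖ / (2 * π) := by positivity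
  refine Summable.of_nonneg_of_le (fun n => norm_nonneg _)
    (fun n => ?_) (((summable_geometric_of_lt_one hq0 hq).mul_left (π^2/3)))
  rw [norm_mul, norm_div, norm_pow]
  have h1 : ‖(bernoulli n : ℂ)‖ = |(bernoulli n : ℝ)| := by
    rw [show ((bernoulli n : ℂ)) = ((bernoulli n : ℝ) : ℂ) by norm_cast,
      Complex.norm_real, Real.norm_eq_abs]
  have h2 : ‖(Nat.factorial n : ℂ)‖ = (Nat.factorial n : ℝ) := by
    rw [show ((Nat.factorial n : ℂ)) = ((Nat.factorial n : ℝ) : ℂ) by norm_cast,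
      Complex.norm_real, Real.norm_eq_abs, abs_of_nonneg (by positivity)]
  rw [h1, h2, div_pow]
  calc |(bernoulli n : ℝ)| / (Nat.factorial n : ℝ) * ‖w‖ ^ n
      ≤ π ^ 2 / 3 / (2 * π) ^ n * ‖w‖ ^ n := by
        exact mul_le_mul_of_nonneg_right (bern_abs_le' n) (by positivity)
    _ = π ^ 2 / 3 * (‖w‖ ^ n / (2 * π) ^ n) := by ring



lemma coeff_exp_sub_one (j : ℕ) :
    (PowerSeries.coeff j) (PowerSeries.exp ℂ - 1) =
      if j = 0 then 0 else ((Nat.factorial j : ℂ))⁻¹ := by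
  rw [map_sub, PowerSeries.coeff_exp, PowerSeries.coeff_one]
  rcases eq_or_ne j 0 with rfl | hj
  · simp
  · simp [hj, one_div]

lemma hasSum_exp_sub_one (w : ℂ) :
    HasSum (fun j => (if j = 0 then 0 else ((Nat.factorial j : ℂ))⁻¹) * w ^ j)
      (Complex.exp w - 1) := by
  have h : HasSum (fun j : ℕ => w ^ j / (Nat.factorial j : ℂ)) (Complex.exp w) := by
    have := (NormedSpace.expSeries_div_summable w).hasSum
    simpa [Complex.exp_eq_exp_ℂ, NormedSpace.exp_eq_tsum_div] using this
  have h2 := h.update 0 0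
  have : Function.update (fun j : ℕ => w ^ j / (Nat.factorial j : ℂ)) 0 0 =
      fun j => (if j = 0 then 0 else ((Nat.factorial j : ℂ))⁻¹) * w ^ j := by
    funext j
    rcases eq_or_ne j 0 with rfl | hj
    · simp
    · simp [Function.update_apply, hj, div_eq_inv_mul, mul_comm]
  rw [this] at h2
  convert h2 using 1
  · rfl
  simp [Nat.factorial]
  ring

lemma tsum_bern_mul (w : ℂ) (hw : ‖w‖ < 2 * π) :
    (∑' n, (bernoulli n : ℂ) / (Nat.factorial n : ℂ) * w ^ n) * (Complex.exp w - 1) = w := by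
  have hf := bern_summable hw
  have hgs := hasSum_exp_sub_one w
  have hg : Summable (fun j => ‖(if j = 0 then 0 else ((Nat.factorial j : ℂ))⁻¹) * w ^ j‖) := by
    refine Summable.of_nonneg_of_le (fun n => norm_nonneg _) (fun n => ?_)
      (Real.summable_pow_div_factorial ‖w‖)
    rw [norm_mul, norm_pow]
    rcases eq_or_ne n 0 with rfl | hn
    · simp
    · simp only [hn, if_false]
      rw [norm_inv]
      rw [show ((Nat.factorial n : ℂ)) = ((Nat.factorial n : ℝ) : ℂ) by norm_cast,
        Complex.norm_real, Real.norm_eq_abs, abs_of_nonneg (by positivity)]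
      rw [div_eq_inv_mul, mul_comm]
  rw [← hgs.tsum_eq, tsum_mul_tsum_eq_tsum_sum_antidiagonal_of_summable_norm hf hg]
  have key : ∀ n : ℕ, (∑ p ∈ antidiagonal n,
      ((bernoulli p.1 : ℂ) / (Nat.factorial p.1 : ℂ) * w ^ p.1) *
        ((if p.2 = 0 then 0 else ((Nat.factorial p.2 : ℂ))⁻¹) * w ^ p.2)) =
      (if n = 1 then (1:ℂ) else 0) * w ^ n := by
    intro n
    have hco := congrArg (PowerSeries.coeff n) (bernoulliPowerSeries_mul_exp_sub_one ℂ)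
    rw [PowerSeries.coeff_mul, PowerSeries.coeff_X] at hco
    have : (∑ p ∈ antidiagonal n,
        ((bernoulli p.1 : ℂ) / (Nat.factorial p.1 : ℂ) * w ^ p.1) *
          ((if p.2 = 0 then 0 else ((Nat.factorial p.2 : ℂ))⁻¹) * w ^ p.2)) =
        (∑ p ∈ antidiagonal n, (PowerSeries.coeff p.1) (bernoulliPowerSeries ℂ) *
          (PowerSeries.coeff p.2) (PowerSeries.exp ℂ - 1)) * w ^ n := by
      rw [sum_mul]
      refine Finset.sum_congr rfl fun p hp => ?_
      rw [coeff_exp_sub_one, bernoulliPowerSeries, PowerSeries.coeff_mk]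
      rw [Finset.HasAntidiagonal.mem_antidiagonal] at hp
      rw [← hp, pow_add, eq_ratCast]
      push_cast
      split_ifs <;> ring
    rw [this, hco]
  rw [tsum_congr key, tsum_eq_single 1 (fun n hn => by simp [hn])]
  simp



lemma key_identity {z : ℂ} (hz : ‖z‖ < π / 2) (hz0 : z ≠ 0) :
    (∑' n, (bernoulli n : ℂ) / (Nat.factorial n : ℂ) * (2 * Complex.I * z) ^ n) -
      (∑' n, (bernoulli n : ℂ) / (Nat.factorial n : ℂ) * (4 * Complex.I * z) ^ n) =
      z * Complex.tan z + Complex.I * z := by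
  have hpi := pi_pos
  have hn2 : ‖2 * Complex.I * z‖ < 2 * π := by
    rw [norm_mul, norm_mul, Complex.norm_I, Complex.norm_ofNat]
    nlinarith [norm_nonneg z]
  have hn4 : ‖4 * Complex.I * z‖ < 2 * π := by
    rw [norm_mul, norm_mul, Complex.norm_I, Complex.norm_ofNat]
    nlinarith [norm_nonneg z]
  set v := Complex.exp (z * Complex.I) with hv
  have hvne : v ≠ 0 := Complex.exp_ne_zero _
  have hv2 : Complex.exp (2 * Complex.I * z) = v ^ 2 := by
    rw [hv, ← Complex.exp_nat_mul]; ring_nf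
  have hv4 : Complex.exp (4 * Complex.I * z) = v ^ 4 := by
    rw [hv, ← Complex.exp_nat_mul]; ring_nf
  -- exp (2Iz) ≠ 1
  have he2 : v ^ 2 - 1 ≠ 0 := by
    rw [sub_ne_zero, ← hv2]
    intro h
    obtain ⟨n, hn⟩ := Complex.exp_eq_one_iff.mp h
    have hzn : z = (n : ℂ) * π := by
      have h2 : (2 * Complex.I) * z = (2 * Complex.I) * ((n : ℂ) * π) := by
        rw [show (2 * Complex.I) * z = 2 * Complex.I * z by ring, hn]; ring
      exact mul_left_cancel₀ (by simp [Complex.I_ne_zero] : (2 * Complex.I : ℂ) ≠ 0) h2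
    rcases eq_or_ne n 0 with rfl | hn0
    · simp at hzn; exact hz0 hzn
    · have : ‖z‖ = |(n : ℝ)| * π := by
        rw [hzn, norm_mul, Complex.norm_intCast, Complex.norm_real, Real.norm_eq_abs,
          abs_of_nonneg hpi.le]
      have h1 : (1 : ℝ) ≤ |(n : ℝ)| := by
        rw [← Int.cast_abs]
        exact_mod_cast Int.one_le_abs (by exact_mod_cast hn0)
      rw [this] at hz
      nlinarith
  have he4 : v ^ 4 - 1 ≠ 0 := by
    rw [sub_ne_zero, ← hv4]
    intro h
    obtain ⟨n, hn⟩ := Complex.exp_eq_one_iff.mp h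
    have hzn : z = (n : ℂ) * π / 2 := by
      have h2 : (4 * Complex.I) * z = (4 * Complex.I) * ((n : ℂ) * π / 2) := by
        rw [show (4 * Complex.I) * z = 4 * Complex.I * z by ring, hn]; ring
      exact mul_left_cancel₀ (by simp [Complex.I_ne_zero] : (4 * Complex.I : ℂ) ≠ 0) h2
    rcases eq_or_ne n 0 with rfl | hn0
    · simp at hzn; exact hz0 hzn
    · have : ‖z‖ = |(n : ℝ)| * π / 2 := by
        rw [hzn, norm_div, norm_mul, Complex.norm_intCast, Complex.norm_real,
          Real.norm_eq_abs, abs_of_nonneg hpi.le, Complex.norm_ofNat]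
      have h1 : (1 : ℝ) ≤ |(n : ℝ)| := by
        rw [← Int.cast_abs]
        exact_mod_cast Int.one_le_abs (by exact_mod_cast hn0)
      rw [this] at hz
      nlinarith
  have hcos : Complex.cos z ≠ 0 := by
    intro h
    obtain ⟨k, hk⟩ := Complex.cos_eq_zero_iff.mp h
    have : ‖z‖ = |(2 * k + 1 : ℝ)| * π / 2 := by
      rw [hk]
      rw [norm_div, norm_mul, Complex.norm_ofNat]
      rw [show ((2 * k + 1 : ℂ)) = (((2 * k + 1 : ℝ)) : ℂ) by push_cast; ring,
        Complex.norm_real, Real.norm_eq_abs, Complex.norm_real, Real.norm_eq_abs,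
        abs_of_nonneg hpi.le]
    have h1 : (1 : ℝ) ≤ |(2 * k + 1 : ℝ)| := by
      have : ((2 * k + 1 : ℤ) : ℝ) = (2 * k + 1 : ℝ) := by push_cast; ring
      rw [← this, ← Int.cast_abs]
      exact_mod_cast Int.one_le_abs (by omega)
    rw [this] at hz
    nlinarith
  have hS2 : (∑' n, (bernoulli n : ℂ) / (Nat.factorial n : ℂ) * (2 * Complex.I * z) ^ n) =
      2 * Complex.I * z / (v ^ 2 - 1) := by
    rw [eq_div_iff he2, ← hv2]
    have := tsum_bern_mul _ hn2
    rw [show Complex.exp (2 * Complex.I * z) - 1 = v ^ 2 - 1 by rw [hv2]] at this ⊢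
    exact this
  have hS4 : (∑' n, (bernoulli n : ℂ) / (Nat.factorial n : ℂ) * (4 * Complex.I * z) ^ n) =
      4 * Complex.I * z / (v ^ 4 - 1) := by
    rw [eq_div_iff he4, ← hv4]
    have := tsum_bern_mul _ hn4
    rw [show Complex.exp (4 * Complex.I * z) - 1 = v ^ 4 - 1 by rw [hv4]] at this ⊢
    exact this
  have hsin : Complex.sin z = (v⁻¹ - v) * Complex.I / 2 := by
    rw [Complex.sin, show (-z * Complex.I) = -(z * Complex.I) by ring, Complex.exp_neg]
  have hcosv : Complex.cos z = (v + v⁻¹) / 2 := by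
    rw [Complex.cos, show (-z * Complex.I) = -(z * Complex.I) by ring, Complex.exp_neg]
  have hc2 : v ^ 2 + 1 ≠ 0 := by
    intro h
    apply hcos
    rw [hcosv]
    field_simp
    linear_combination h
  have hvv : v + v⁻¹ ≠ 0 := by
    intro h; apply hcos; rw [hcosv, h]; simp
  have h4fac : v ^ 4 - 1 = (v ^ 2 - 1) * (v ^ 2 + 1) := by ring
  have hc2' : 1 + v ^ 2 ≠ 0 := by rwa [add_comm]
  have htan : Complex.tan z = Complex.I * (1 - v ^ 2) / (1 + v ^ 2) := by
    rw [Complex.tan_eq_sin_div_cos, hsin, hcosv,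
      div_eq_div_iff (div_ne_zero hvv two_ne_zero) hc2']
    field_simp
    ring
  rw [hS2, hS4, htan, h4fac]
  field_simp
  ring



theorem tan_series (z : ℂ) (hz : ‖z‖ < Real.pi / 2) :
    HasSum
      (fun n : ℕ => (-1 : ℂ) ^ ((n + 1) + 1) * 2 ^ (2 * (n + 1))
        * (2 ^ (2 * (n + 1)) - 1) * (bernoulli (2 * (n + 1)) : ℂ)
        * z ^ (2 * (n + 1) - 1) / (Nat.factorial (2 * (n + 1)) : ℂ))
      (Complex.tan z) := by
  rcases eq_or_ne z 0 with rfl | hz0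
  · have : (fun n : ℕ => (-1 : ℂ) ^ ((n + 1) + 1) * 2 ^ (2 * (n + 1))
        * (2 ^ (2 * (n + 1)) - 1) * (bernoulli (2 * (n + 1)) : ℂ)
        * (0:ℂ) ^ (2 * (n + 1) - 1) / (Nat.factorial (2 * (n + 1)) : ℂ)) = fun _ => 0 := by
      funext n
      rw [zero_pow (by omega)]
      ring
    rw [this, Complex.tan_zero]
    exact hasSum_zero
  have hpi := pi_pos
  have hn2 : ‖2 * Complex.I * z‖ < 2 * π := by
    rw [norm_mul, norm_mul, Complex.norm_I, Complex.norm_ofNat]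
    nlinarith [norm_nonneg z]
  have hn4 : ‖4 * Complex.I * z‖ < 2 * π := by
    rw [norm_mul, norm_mul, Complex.norm_I, Complex.norm_ofNat]
    nlinarith [norm_nonneg z]
  have h2 := ((bern_summable hn2).of_norm).hasSum
  have h4 := ((bern_summable hn4).of_norm).hasSum
  set f : ℕ → ℂ := fun n => (bernoulli n : ℂ) / (Nat.factorial n : ℂ) * (2 * Complex.I * z) ^ n
    - (bernoulli n : ℂ) / (Nat.factorial n : ℂ) * (4 * Complex.I * z) ^ n with hf
  have hsub : HasSum f (z * Complex.tan z + Complex.I * z) := by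
    rw [← key_identity hz hz0]
    exact h2.sub h4
  have hf1 : f 1 = Complex.I * z := by
    rw [hf]
    simp [bernoulli_one, Nat.factorial]
    push_cast
    ring
  have hupd := hsub.update 1 0
  rw [hf1] at hupd
  have hsum0 : (0 : ℂ) - Complex.I * z + (z * Complex.tan z + Complex.I * z) =
      z * Complex.tan z := by ring
  rw [hsum0] at hupd
  have hinj : Function.Injective (fun m : ℕ => 2 * (m + 1)) := by
    intro a b h
    simpa using h
  have hvanish : ∀ x ∉ Set.range (fun m : ℕ => 2 * (m + 1)),
      Function.update f 1 0 x = 0 := by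
    intro x hx
    rcases Nat.even_or_odd x with ⟨k, hk⟩ | hodd
    · rcases Nat.eq_zero_or_pos k with rfl | hkpos
      · have hx0 : x = 0 := by omega
        subst hx0
        rw [Function.update_apply, if_neg (by norm_num), hf]
        simp
      · exact absurd ⟨k - 1, by simp; omega⟩ hx
    · rcases eq_or_ne x 1 with rfl | hx1
      · simp
      · have hb : bernoulli x = 0 := by
          rw [bernoulli_eq_bernoulli'_of_ne_one hx1,
            bernoulli'_eq_zero_of_odd hodd (by rcases hodd with ⟨k, hk⟩; omega)]
        rw [Function.update_apply, if_neg hx1, hf]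
        simp [hb]
  have hcomp : HasSum (fun m => Function.update f 1 0 (2 * (m + 1))) (z * Complex.tan z) :=
    (hinj.hasSum_iff hvanish).mpr hupd
  have hterm : ∀ m : ℕ, Function.update f 1 0 (2 * (m + 1)) =
      z * ((-1 : ℂ) ^ ((m + 1) + 1) * 2 ^ (2 * (m + 1))
        * (2 ^ (2 * (m + 1)) - 1) * (bernoulli (2 * (m + 1)) : ℂ)
        * z ^ (2 * (m + 1) - 1) / (Nat.factorial (2 * (m + 1)) : ℂ)) := by
    intro m
    rw [Function.update_apply, if_neg (by omega), hf]
    dsimp only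
    have hsq2 : (2 * Complex.I * z) ^ 2 = -4 * z ^ 2 := by
      rw [mul_pow, mul_pow, Complex.I_sq]; ring
    have hsq4 : (4 * Complex.I * z) ^ 2 = -16 * z ^ 2 := by
      rw [mul_pow, mul_pow, Complex.I_sq]; ring
    have hp2 : (2 * Complex.I * z) ^ (2 * (m + 1)) = (-4 : ℂ) ^ (m + 1) * z ^ (2 * (m + 1)) := by
      rw [pow_mul, hsq2, mul_pow, ← pow_mul]
    have hp4 : (4 * Complex.I * z) ^ (2 * (m + 1)) = (-16 : ℂ) ^ (m + 1) * z ^ (2 * (m + 1)) := by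
      rw [pow_mul, hsq4, mul_pow, ← pow_mul]
    have hm4 : (-4 : ℂ) ^ (m + 1) = (-1 : ℂ) ^ (m + 1) * 2 ^ (2 * (m + 1)) := by
      rw [show (-4 : ℂ) = -1 * 2 ^ 2 by norm_num, mul_pow, ← pow_mul]
    have hm16 : (-16 : ℂ) ^ (m + 1) =
        (-1 : ℂ) ^ (m + 1) * (2 ^ (2 * (m + 1)) * 2 ^ (2 * (m + 1))) := by
      rw [show (-16 : ℂ) = -1 * (2 ^ 2 * 2 ^ 2) by norm_num, mul_pow, mul_pow, ← pow_mul]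
    have hzp : z ^ (2 * (m + 1) - 1) * z = z ^ (2 * (m + 1)) := by
      rw [← pow_succ, show 2 * (m + 1) - 1 + 1 = 2 * (m + 1) from by omega]
    rw [hp2, hp4, hm4, hm16, pow_succ, ← hzp]
    ring
  have hcomp2 : HasSum (fun m : ℕ => z * ((-1 : ℂ) ^ ((m + 1) + 1) * 2 ^ (2 * (m + 1))
        * (2 ^ (2 * (m + 1)) - 1) * (bernoulli (2 * (m + 1)) : ℂ)
        * z ^ (2 * (m + 1) - 1) / (Nat.factorial (2 * (m + 1)) : ℂ)))
      (z * Complex.tan z) := by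
    rwa [funext hterm] at hcomp
  have := hcomp2.div_const z
  simpa [mul_div_cancel_left₀ _ hz0] using this
end
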